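/- Let X be an A-correspondence, Y a B-correspondence, R an A-B correspondence, and S a B-A correspondence with X ≅ R ⊗_B S and Y ≅ S ⊗_A R. Let I = span⟨X,X⟩ ⊴ A and J = span⟨Y,Y⟩ ⊴ B. Then IR ⊆ RJ and JS ⊆ SI. -/

import Mathlib

/-! Basic framework: C*-correspondences over (possibly non-unital) C*-algebras,
interior tensor products (characterized by their universal properties),
closed ideals, and unitary isomorphisms of correspondences. -/

noncomputable section

/-- A (non-degenerate) A–B C*-correspondence: a right Hilbert `B`-module `X`
together with a left action of `A` by adjointable operators. -/
structure Corr (A B : Type) [NonUnitalCStarAlgebra A] [NonUnitalCStarAlgebra B] : Type 1 where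
  X : Type
  [grp : NormedAddCommGroup X]
  [nsc : NormedSpace ℂ X]
  [cpl : CompleteSpace X]
  /-- the right action of `B` -/
  sm : X → B → X
  /-- the `B`-valued inner product (linear in the second variable) -/
  ip : X → X → B
  /-- the left action of `A` -/
  φ : A → X → X
  sm_add : ∀ x y b, sm (x + y) b = sm x b + sm y b
  sm_add' : ∀ x b c, sm x (b + c) = sm x b + sm x c
  sm_mul : ∀ x b c, sm (sm x b) c = sm x (b * c)
  sm_smul : ∀ (t : ℂ) x b, sm (t • x) b = t • sm x b
  sm_smul' : ∀ (t : ℂ) x b, sm x (t • b) = t • sm x b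
  ip_add : ∀ x y z, ip x (y + z) = ip x y + ip x z
  ip_smul : ∀ (t : ℂ) x y, ip x (t • y) = t • ip x y
  ip_sm : ∀ x y b, ip x (sm y b) = ip x y * b
  ip_star : ∀ x y, star (ip x y) = ip y x
  ip_pos : ∀ x, ∃ b, ip x x = star b * b
  ip_norm : ∀ x, ‖x‖ ^ 2 = ‖ip x x‖
  φ_add : ∀ a x y, φ a (x + y) = φ a x + φ a y
  φ_add' : ∀ a b x, φ (a + b) x = φ a x + φ b x
  φ_smul : ∀ a (t : ℂ) x, φ a (t • x) = t • φ a x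
  φ_smul' : ∀ (t : ℂ) a x, φ (t • a) x = t • φ a x
  φ_mul : ∀ a b x, φ (a * b) x = φ a (φ b x)
  φ_adj : ∀ a x y, ip (φ a x) y = ip x (φ (star a) y)
  /-- non-degeneracy of the left action -/
  nondeg : closure (Submodule.span ℂ {z | ∃ a x, z = φ a x} : Set X) = Set.univ

attribute [instance] Corr.grp Corr.nsc Corr.cpl

variable {A B C : Type} [NonUnitalCStarAlgebra A] [NonUnitalCStarAlgebra B]
  [NonUnitalCStarAlgebra C]

/-- `Z.setR I` is the closed submodule `Z·I` of `Z`. -/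
def Corr.setR (Z : Corr A B) (I : Set B) : Set Z.X :=
  closure (Submodule.span ℂ {x | ∃ ξ b, b ∈ I ∧ x = Z.sm ξ b} : Set Z.X)

/-- `Z.setL I` is the closed subspace `I·Z` of `Z`. -/
def Corr.setL (Z : Corr A B) (I : Set A) : Set Z.X :=
  closure (Submodule.span ℂ {x | ∃ a ξ, a ∈ I ∧ x = Z.φ a ξ} : Set Z.X)

/-- `Z⁻¹(I) = {a ∈ A : φ_Z(a)Z ⊆ ZI}`. -/
def Corr.inv (Z : Corr A B) (I : Set B) : Set A := {a | ∀ ξ, Z.φ a ξ ∈ Z.setR I}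

/-- The closed ideal of `B` generated by the inner products of `Z`. -/
def Corr.ipSet (Z : Corr A B) : Set B :=
  closure (Submodule.span ℂ {b | ∃ x y, b = Z.ip x y} : Set B)

/-- A generalized compact operator on the underlying Hilbert module of a correspondence:
one that is approximable in operator norm by finite sums of "rank one" operators
`θ_{ξ,η} : z ↦ ξ·⟨η,z⟩`. -/
def Corr.IsCompactOp (Z : Corr A B) (f : Z.X → Z.X) : Prop :=
  ∀ ε > (0 : ℝ), ∃ (n : ℕ) (ξ η : Fin n → Z.X),
    ∀ z, ‖f z - ∑ i, Z.sm (ξ i) (Z.ip (η i) z)‖ ≤ ε * ‖z‖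

/-- A closed (two-sided, automatically self-adjoint) ideal of a C*-algebra, as a set. -/
structure IsCIdeal {B : Type} [NonUnitalCStarAlgebra B] (I : Set B) : Prop where
  isClosed : IsClosed I
  zero_mem : (0 : B) ∈ I
  add_mem : ∀ x y, x ∈ I → y ∈ I → x + y ∈ I
  smul_mem : ∀ (t : ℂ) x, x ∈ I → t • x ∈ I
  mul_left_mem : ∀ b x, x ∈ I → b * x ∈ I
  mul_right_mem : ∀ b x, x ∈ I → x * b ∈ I

/-- `t : Z₁ × Z₂ → T` exhibits `T` as the interior tensor product `Z₁ ⊗_B Z₂`. -/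
structure IsTensor (Z₁ : Corr A B) (Z₂ : Corr B C) (T : Corr A C)
    (t : Z₁.X → Z₂.X → T.X) : Prop where
  add_left : ∀ x x' y, t (x + x') y = t x y + t x' y
  add_right : ∀ x y y', t x (y + y') = t x y + t x y'
  smul_left : ∀ (c : ℂ) x y, t (c • x) y = c • t x y
  balanced : ∀ x b y, t (Z₁.sm x b) y = t x (Z₂.φ b y)
  sm_right : ∀ x y c, t x (Z₂.sm y c) = T.sm (t x y) c
  act_left : ∀ a x y, T.φ a (t x y) = t (Z₁.φ a x) y
  inner : ∀ x x' y y', T.ip (t x y) (t x' y') = Z₂.ip y (Z₂.φ (Z₁.ip x x') y')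
  dense : closure (Submodule.span ℂ {z | ∃ x y, z = t x y} : Set T.X) = Set.univ

/-- `X ≅ Z₁ ⊗ Z₂` (unitary isomorphism with the interior tensor product). -/
def IsTensorProd (Z₁ : Corr A B) (Z₂ : Corr B C) (T : Corr A C) : Prop :=
  ∃ t, IsTensor Z₁ Z₂ T t

/-- A unitary isomorphism of A–B correspondences. -/
def CorrIso (Z W : Corr A B) : Prop :=
  ∃ u : Z.X → W.X, Function.Surjective u ∧ (∀ x y, u (x + y) = u x + u y) ∧
    (∀ (c : ℂ) x, u (c • x) = c • u x) ∧ (∀ a x, u (Z.φ a x) = W.φ a (u x)) ∧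
    (∀ x b, u (Z.sm x b) = W.sm (u x) b) ∧ (∀ x y, W.ip (u x) (u y) = Z.ip x y)

end

/-!
For `X ≅ R ⊗_B S` the inner products `⟨r ⊗ s, r' ⊗ s'⟩ = ⟨s, φ_S(⟨r, r'⟩) s'⟩` lie in `⟨S, S⟩`,
so by density and continuity `I ⊆ ⟨S, S⟩`. For `Y ≅ S ⊗_A R`,
`⟨r', φ_R(⟨s, s'⟩) r⟩ = ⟨s ⊗ r', s' ⊗ r⟩ ∈ J`, hence `⟨ρ, φ_R(a) r⟩ ∈ J` for all `a ∈ I`.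
Finally every vector `ξ` of a Hilbert module lies in the closed span of the `ρ · ⟨ρ', ξ⟩`,
so `φ_R(a) r ∈ RJ`. The second inclusion is the first with the two pairs exchanged.
-/

lemma exists_continuous_mul_one_sub_mul_sq_le {δ : ℝ} (hδ : 0 < δ) :
    ∃ k : ℝ → ℝ, Continuous k ∧ k 0 = 0 ∧ ∀ t, 0 ≤ t → t * (1 - k t * t) ^ 2 ≤ δ := by
  refine ⟨fun t => t / (δ ^ 2 + t ^ 2), ?_, by simp, fun t ht => ?_⟩
  · exact continuous_id.div (by fun_prop) fun t => by positivity
  have hD : 0 < δ ^ 2 + t ^ 2 := by positivity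
  have h2 : 2 * δ * t ≤ δ ^ 2 + t ^ 2 := by nlinarith [sq_nonneg (δ - t)]
  rw [div_mul_eq_mul_div, one_sub_div hD.ne', div_pow, mul_div_assoc', div_le_iff₀ (by positivity),
    show δ ^ 2 + t ^ 2 - t * t = δ ^ 2 by ring]
  have h3 : δ ^ 2 * (2 * δ * t) ≤ (δ ^ 2 + t ^ 2) ^ 2 := by
    rw [sq (δ ^ 2 + t ^ 2)]; exact mul_le_mul (by nlinarith) h2 (by positivity) hD.le
  nlinarith [mul_le_mul_of_nonneg_left h3 hδ.le, mul_nonneg ht hδ.le, pow_pos hδ 4]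

namespace Corr

variable {A B : Type} [NonUnitalCStarAlgebra A] [NonUnitalCStarAlgebra B] (Z : Corr A B)

lemma ip_add_left (x y z : Z.X) : Z.ip (x + y) z = Z.ip x z + Z.ip y z := by
  rw [← Z.ip_star z, Z.ip_add, star_add, Z.ip_star, Z.ip_star]

lemma ip_smul_left (c : ℂ) (x y : Z.X) : Z.ip (c • x) y = star c • Z.ip x y := by
  rw [← Z.ip_star y, Z.ip_smul, star_smul, Z.ip_star]

lemma ip_sm_left (x y : Z.X) (b : B) : Z.ip (Z.sm x b) y = star b * Z.ip x y := by
  rw [← Z.ip_star y, Z.ip_sm, star_mul, Z.ip_star]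

def ipₛₗ : Z.X →ₗ⋆[ℂ] Z.X →ₗ[ℂ] B :=
  LinearMap.mk₂'ₛₗ _ _ Z.ip Z.ip_add_left Z.ip_smul_left Z.ip_add Z.ip_smul

@[simp] lemma ipₛₗ_apply (x y : Z.X) : Z.ipₛₗ x y = Z.ip x y := rfl

def φₗ : A →ₗ[ℂ] Z.X →ₗ[ℂ] Z.X :=
  LinearMap.mk₂ ℂ Z.φ Z.φ_add' Z.φ_smul' Z.φ_add fun t a x => Z.φ_smul a t x

@[simp] lemma φₗ_apply (a : A) (x : Z.X) : Z.φₗ a x = Z.φ a x := rfl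

lemma ip_zero_left (x : Z.X) : Z.ip 0 x = 0 := Z.ipₛₗ.map_zero₂ x

lemma ip_sub_left (x y z : Z.X) : Z.ip (x - y) z = Z.ip x z - Z.ip y z := Z.ipₛₗ.map_sub₂ x y z

lemma ip_sub_right (x y z : Z.X) : Z.ip x (y - z) = Z.ip x y - Z.ip x z := map_sub (Z.ipₛₗ x) y z

lemma ip_sm_sub_smul (x y : Z.X) (b : B) (r : ℝ) :
    Z.ip (Z.sm x b - (r : ℂ) • y) (Z.sm x b - (r : ℂ) • y) =
      star b * Z.ip x x * b - r • (star b * Z.ip x y) - r • (Z.ip y x * b) + (r * r) • Z.ip y y := by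
  simp only [ip_sub_left, ip_sub_right, ip_sm_left, Z.ip_sm, ip_smul_left, Z.ip_smul]
  simp only [Complex.star_def, Complex.conj_ofReal, Complex.coe_smul, sub_mul, smul_sub,
    smul_mul_assoc, smul_smul, mul_assoc]
  abel

section Order

variable [PartialOrder B] [StarOrderedRing B]

lemma ip_self_nonneg (x : Z.X) : 0 ≤ Z.ip x x := by
  obtain ⟨b, hb⟩ := Z.ip_pos x
  exact hb ▸ star_mul_self_nonneg b

lemma star_ip_mul_ip_le (x y : Z.X) :
    star (Z.ip x y) * Z.ip x y ≤ ‖x‖ ^ 2 • Z.ip y y := by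
  rcases eq_or_ne x 0 with rfl | hx
  · simp [ip_zero_left]
  have hr : 0 < ‖x‖ ^ 2 := by positivity
  have hconj := CStarAlgebra.star_left_conjugate_le_norm_smul (a := Z.ip x y) (Z.ip_star x x)
  rw [← Z.ip_norm] at hconj
  have hw := Z.ip_self_nonneg (Z.sm x (Z.ip x y) - ((‖x‖ ^ 2 : ℝ) : ℂ) • y)
  rw [ip_sm_sub_smul, ← Z.ip_star x y] at hw
  have key : 0 ≤ ‖x‖ ^ 2 • (‖x‖ ^ 2 • Z.ip y y - star (Z.ip x y) * Z.ip x y) := by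
    calc 0 ≤ _ := add_nonneg hw (sub_nonneg.2 hconj)
      _ = _ := by rw [smul_sub, smul_smul]; abel
  exact sub_nonneg.1 ((smul_nonneg_iff_nonneg_of_pos_left hr).1 key)

end Order

lemma norm_ip_le (x y : Z.X) : ‖Z.ip x y‖ ≤ ‖x‖ * ‖y‖ := by
  let := CStarAlgebra.spectralOrder B
  have := CStarAlgebra.spectralOrderedRing B
  have h := CStarAlgebra.norm_le_norm_of_nonneg_of_le (star_mul_self_nonneg _)
    (Z.star_ip_mul_ip_le x y)
  rw [CStarRing.norm_star_mul_self, norm_smul, ← Z.ip_norm, Real.norm_of_nonneg (by positivity),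
    ← sq, ← mul_pow] at h
  exact le_of_pow_le_pow_left₀ two_ne_zero (by positivity) h

lemma continuous_ipₛₗ (x : Z.X) : Continuous (Z.ipₛₗ x) :=
  AddMonoidHomClass.continuous_of_bound _ ‖x‖ (Z.norm_ip_le x)

lemma continuous_ipₛₗ_flip (y : Z.X) : Continuous (Z.ipₛₗ.flip y) :=
  AddMonoidHomClass.continuous_of_bound _ ‖y‖ fun x => (Z.norm_ip_le x y).trans_eq (mul_comm _ _)

lemma ip_φ_self_nonneg [PartialOrder A] [StarOrderedRing A] [PartialOrder B] [StarOrderedRing B]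
    {a : A} (ha : 0 ≤ a) (x : Z.X) : 0 ≤ Z.ip x (Z.φ a x) := by
  obtain ⟨e, rfl⟩ := CStarAlgebra.nonneg_iff_eq_star_mul_self.1 ha
  rw [Z.φ_mul, ← Z.φ_adj]
  exact Z.ip_self_nonneg _

/-- The left action is bounded because `a ↦ ⟨x, φ a x⟩` is a positive linear map, hence bounded,
and `‖φ a x‖ ^ 2 = ‖⟨x, φ (star a * a) x⟩‖`. -/
lemma continuous_φₗ_flip (x : Z.X) : Continuous (Z.φₗ.flip x) := by
  let := CStarAlgebra.spectralOrder A
  have := CStarAlgebra.spectralOrderedRing A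
  let := CStarAlgebra.spectralOrder B
  have := CStarAlgebra.spectralOrderedRing B
  obtain ⟨C, hC⟩ := PositiveLinearMap.exists_norm_apply_le <|
    PositiveLinearMap.mk₀ ((Z.ipₛₗ x).comp (Z.φₗ.flip x)) fun a ha => Z.ip_φ_self_nonneg ha x
  refine AddMonoidHomClass.continuous_of_bound _ √C fun a => ?_
  have h : ‖Z.φ a x‖ ^ 2 ≤ C * ‖a‖ ^ 2 := by
    calc ‖Z.φ a x‖ ^ 2 = ‖Z.ip x (Z.φ (star a * a) x)‖ := by rw [Z.ip_norm, Z.φ_adj, ← Z.φ_mul]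
      _ ≤ C * ‖star a * a‖ := hC _
      _ = C * ‖a‖ ^ 2 := by rw [CStarRing.norm_star_mul_self, sq]
  rw [← Real.sqrt_sq (norm_nonneg a), ← Real.sqrt_mul' _ (sq_nonneg _)]
  exact Real.le_sqrt_of_sq_le h

lemma ip_sub_sm_self (ξ : Z.X) {u : B} (hu : IsSelfAdjoint u) :
    Z.ip (ξ - Z.sm ξ u) (ξ - Z.sm ξ u) =
      Z.ip ξ ξ - Z.ip ξ ξ * u - u * Z.ip ξ ξ + u * Z.ip ξ ξ * u := by
  simp only [ip_sub_left, ip_sub_right, ip_sm_left, Z.ip_sm, hu.star_eq, sub_mul, mul_assoc]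
  abel

lemma norm_sub_sm_cfcₙ_sq_le (ξ : Z.X) {g : ℝ → ℝ} (hg : Continuous g) (hg0 : g 0 = 0) {δ : ℝ}
    (hδ : ∀ t, 0 ≤ t → t * (1 - g t) ^ 2 ≤ δ) :
    ‖ξ - Z.sm ξ (cfcₙ g (Z.ip ξ ξ))‖ ^ 2 ≤ δ := by
  let := CStarAlgebra.spectralOrder B
  have := CStarAlgebra.spectralOrderedRing B
  set h := Z.ip ξ ξ
  have hh : IsSelfAdjoint h := Z.ip_star ξ ξ
  have hcfc : h - h * cfcₙ g h - cfcₙ g h * h + cfcₙ g h * h * cfcₙ g h =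
      cfcₙ (fun t => t * (1 - g t) ^ 2) h := by
    rw [show (fun t => t * (1 - g t) ^ 2) = fun t => t - t * g t - g t * t + g t * t * g t by
      funext t; ring]
    rw [cfcₙ_add .., cfcₙ_sub .., cfcₙ_sub .., cfcₙ_mul (fun t => g t * t) g, cfcₙ_mul g (fun t => t),
      cfcₙ_mul (fun t => t) g, cfcₙ_id' ℝ h]
  rw [Z.ip_norm, ip_sub_sm_self _ _ (IsSelfAdjoint.cfcₙ), hcfc]
  refine norm_cfcₙ_le fun t ht => ?_
  have ht0 := quasispectrum_nonneg_of_nonneg h (Z.ip_self_nonneg ξ) t ht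
  rw [Real.norm_of_nonneg (by positivity)]
  exact hδ t ht0

/-- With `h = ⟨ξ, ξ⟩`, the generator `(ξ · k(h)) · h` approximates `ξ`, since
`‖ξ - ξ · (k(h) h)‖ ^ 2 = ‖h (1 - k(h) h) ^ 2‖`. -/
lemma mem_closure_span_sm_ip (ξ : Z.X) :
    ξ ∈ closure (Submodule.span ℂ {w | ∃ ρ ρ', w = Z.sm ρ (Z.ip ρ' ξ)} : Set Z.X) := by
  rw [Metric.mem_closure_iff]
  intro ε hε
  obtain ⟨k, hk, hk0, hkδ⟩ := exists_continuous_mul_one_sub_mul_sq_le (half_pos (pow_pos hε 2))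
  have hh : IsSelfAdjoint (Z.ip ξ ξ) := Z.ip_star ξ ξ
  refine ⟨Z.sm (Z.sm ξ (cfcₙ k (Z.ip ξ ξ))) (Z.ip ξ ξ), Submodule.subset_span ⟨_, ξ, rfl⟩, ?_⟩
  have := Z.norm_sub_sm_cfcₙ_sq_le ξ (g := fun t => k t * t) (by fun_prop) (by simp [hk0]) hkδ
  rw [cfcₙ_mul k (fun t => t), cfcₙ_id' ℝ _, ← Z.sm_mul] at this
  rw [dist_eq_norm]
  exact lt_of_pow_lt_pow_left₀ 2 hε.le (by linarith [pow_pos hε 2])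

lemma mem_setR_of_forall_ip_mem {J : Set B} {ξ : Z.X} (h : ∀ ρ, Z.ip ρ ξ ∈ J) :
    ξ ∈ Z.setR J :=
  closure_mono (Submodule.span_mono <| by rintro _ ⟨ρ, ρ', rfl⟩; exact ⟨ρ, _, h ρ', rfl⟩)
    (Z.mem_closure_span_sm_ip ξ)

def ipSpan : Submodule ℂ B := (Submodule.span ℂ {b | ∃ x y, b = Z.ip x y}).topologicalClosure

lemma isClosed_ipSpan : IsClosed (Z.ipSpan : Set B) := Submodule.isClosed_topologicalClosure _

end Corr

lemma map_mem_of_mem_closure_span {R R₂ E F : Type*} [Semiring R] [Semiring R₂] {σ : R →+* R₂}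
    [AddCommMonoid E] [Module R E] [TopologicalSpace E]
    [AddCommMonoid F] [Module R₂ F] [TopologicalSpace F]
    (f : E →ₛₗ[σ] F) (hf : Continuous f) {s : Set E} {K : Submodule R₂ F}
    (hK : IsClosed (K : Set F)) (hs : ∀ x ∈ s, f x ∈ K) {x : E}
    (hx : x ∈ closure (Submodule.span R s : Set E)) : f x ∈ K :=
  closure_minimal (Submodule.span_le.2 hs : Submodule.span R s ≤ K.comap f) (hK.preimage hf) hx

namespace IsTensor

variable {A B C : Type} [NonUnitalCStarAlgebra A] [NonUnitalCStarAlgebra B]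
  [NonUnitalCStarAlgebra C] {Z₁ : Corr A B} {Z₂ : Corr B C} {T : Corr A C}
  {t : Z₁.X → Z₂.X → T.X}

lemma mem_closure_span (ht : IsTensor Z₁ Z₂ T t) (z : T.X) :
    z ∈ closure (Submodule.span ℂ {z | ∃ x y, z = t x y} : Set T.X) :=
  ht.dense ▸ Set.mem_univ z

lemma ip_mem_ipSpan (ht : IsTensor Z₁ Z₂ T t) (z w : T.X) : T.ip z w ∈ Z₂.ipSpan := by
  have ip_tensor_mem : ∀ x y z, T.ip z (t x y) ∈ Z₂.ipSpan := fun x y z => by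
    refine map_mem_of_mem_closure_span (T.ipₛₗ.flip (t x y)) (T.continuous_ipₛₗ_flip _)
      Z₂.isClosed_ipSpan ?_ (ht.mem_closure_span z)
    rintro _ ⟨x', y', rfl⟩
    rw [LinearMap.flip_apply, Corr.ipₛₗ_apply, ht.inner]
    exact Submodule.le_topologicalClosure _ (Submodule.subset_span ⟨_, _, rfl⟩)
  refine map_mem_of_mem_closure_span (T.ipₛₗ z) (T.continuous_ipₛₗ z) Z₂.isClosed_ipSpan ?_
    (ht.mem_closure_span w)
  rintro _ ⟨x, y, rfl⟩
  exact ip_tensor_mem x y z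

lemma ipSet_subset (ht : IsTensor Z₁ Z₂ T t) : T.ipSet ⊆ Z₂.ipSet := by
  refine closure_minimal ((Submodule.span_le (p := Z₂.ipSpan)).2 ?_) Z₂.isClosed_ipSpan
  rintro _ ⟨z, w, rfl⟩
  exact ht.ip_mem_ipSpan z w

lemma ip_φ_mem_ipSet (ht : IsTensor Z₁ Z₂ T t) {b : B} (hb : b ∈ Z₁.ipSet) (y y' : Z₂.X) :
    Z₂.ip y (Z₂.φ b y') ∈ T.ipSet := by
  refine map_mem_of_mem_closure_span ((Z₂.ipₛₗ y).comp (Z₂.φₗ.flip y'))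
    ((Z₂.continuous_ipₛₗ y).comp (Z₂.continuous_φₗ_flip y')) T.isClosed_ipSpan ?_ hb
  rintro _ ⟨x, x', rfl⟩
  rw [LinearMap.comp_apply, LinearMap.flip_apply, Corr.φₗ_apply, Corr.ipₛₗ_apply, ← ht.inner]
  exact subset_closure (Submodule.subset_span ⟨_, _, rfl⟩)

end IsTensor

lemma Corr.φ_mem_setR_ipSet_of_isTensorProd {A B : Type} [NonUnitalCStarAlgebra A]
    [NonUnitalCStarAlgebra B] {X : Corr A A} {Y : Corr B B} {R : Corr A B} {S : Corr B A}
    (hX : IsTensorProd R S X) (hY : IsTensorProd S R Y) {a : A} (ha : a ∈ X.ipSet) (r : R.X) :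
    R.φ a r ∈ R.setR Y.ipSet := by
  obtain ⟨t, ht⟩ := hX
  obtain ⟨u, hu⟩ := hY
  exact R.mem_setR_of_forall_ip_mem fun r' => hu.ip_φ_mem_ipSet (ht.ipSet_subset ha) r' r

/-- with `I = span⟨X,X⟩ ⊴ A` and `J = span⟨Y,Y⟩ ⊴ B`,
if `X ≅ R ⊗_B S` and `Y ≅ S ⊗_A R` then `IR ⊆ RJ` and `JS ⊆ SI`. -/
theorem stmt11 {A B : Type} [NonUnitalCStarAlgebra A] [NonUnitalCStarAlgebra B]
    (X : Corr A A) (Y : Corr B B) (R : Corr A B) (S : Corr B A)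
    (hX : IsTensorProd R S X) (hY : IsTensorProd S R Y) :
    (∀ a ∈ X.ipSet, ∀ r, R.φ a r ∈ R.setR Y.ipSet) ∧
    (∀ b ∈ Y.ipSet, ∀ s, S.φ b s ∈ S.setR X.ipSet) :=
  ⟨fun _ ha r => Corr.φ_mem_setR_ipSet_of_isTensorProd hX hY ha r,
    fun _ hb s => Corr.φ_mem_setR_ipSet_of_isTensorProd hY hX hb s⟩
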